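/- arXiv:1110.4026 — 3 statements merged into one kernel-verified Lean document; each statement's English description precedes it below -/
import Mathlib

section
/- Let Λ be a k-graph and x an infinite path (functor Ω_k → Λ). If for every m ≠ n in ℕ^k the finite path λ := x(0, p + (m∨n)) satisfies λ(m, m + d(λ) − (m∨n)) ≠ λ(n, n + d(λ) − (m∨n)) for some p ∈ ℕ^k, then x is aperiodic. Conversely, if x is aperiodic then for all m ≠ n there exists such a λ = x(0, p + (m∨n)). -/
/-! By unique factorisation the segment `λ(m, m + p)` of `λ = x(0, p + (m ∨ n))` is `x(m, m + p)`,
so (⋆) for `m, n, p` says `x(m, m + p) ≠ x(n, n + p)`. On the other hand `σ^m x = σ^n x` as soon as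
`x(m, m + p) = x(n, n + p)` for all `p`, because `x(m + q, m + q')` is recovered from `x(m, m + q')`
as its second factor of degree `q' - q`. -/

structure KGraph (k : ℕ) where
  Obj : Type
  Mor : Type
  src : Mor → Obj
  rng : Mor → Obj
  idm : Obj → Mor
  comp : Mor → Mor → Mor
  deg : Mor → Fin k → ℕ
  idm_src : ∀ v, src (idm v) = v
  idm_rng : ∀ v, rng (idm v) = v
  comp_src : ∀ μ ν, src μ = rng ν → src (comp μ ν) = src ν
  comp_rng : ∀ μ ν, src μ = rng ν → rng (comp μ ν) = rng μ
  comp_assoc : ∀ μ ν ξ, src μ = rng ν → src ν = rng ξ →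
    comp (comp μ ν) ξ = comp μ (comp ν ξ)
  idm_comp : ∀ μ, comp (idm (rng μ)) μ = μ
  comp_idm : ∀ μ, comp μ (idm (src μ)) = μ
  deg_comp : ∀ μ ν, src μ = rng ν → deg (comp μ ν) = deg μ + deg ν
  deg_idm : ∀ v, deg (idm v) = 0
  factor : ∀ (l : Mor) (m n : Fin k → ℕ), deg l = m + n →
    ∃! p : Mor × Mor, src p.1 = rng p.2 ∧ deg p.1 = m ∧ deg p.2 = n ∧ comp p.1 p.2 = l

namespace KGraph

variable {k : ℕ} (G : KGraph k)

/-- The segment `l(a,b)` of a path `l`: the unique middle factor of degree `b - a`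
in the factorization `l = l(0,a) l(a,b) l(b, d(l))`. -/
noncomputable def seg (l : G.Mor) (a b : Fin k → ℕ) (hab : a ≤ b) (hb : b ≤ G.deg l) : G.Mor :=
  have h1 : G.deg l = a + (G.deg l - a) := by
    funext i
    have h2 : a i ≤ b i := hab i
    have h3 : b i ≤ G.deg l i := hb i
    simp only [Pi.add_apply, Pi.sub_apply]
    omega
  have h2 : G.deg ((G.factor l a (G.deg l - a) h1).exists.choose.2) =
      (b - a) + (G.deg l - b) := by
    have hp := (G.factor l a (G.deg l - a) h1).exists.choose_spec
    rw [hp.2.2.1]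
    funext i
    have h3 : a i ≤ b i := hab i
    have h4 : b i ≤ G.deg l i := hb i
    simp only [Pi.add_apply, Pi.sub_apply]
    omega
  ((G.factor _ (b - a) (G.deg l - b) h2).exists.choose).1

/-- `l` is a common extension of `μ` and `ν`. -/
def CommonExt (μ ν l : G.Mor) : Prop :=
  (∃ μ', G.src μ = G.rng μ' ∧ G.comp μ μ' = l) ∧
  (∃ ν', G.src ν = G.rng ν' ∧ G.comp ν ν' = l)

/-- The set of minimal common extensions of `μ` and `ν`. -/
def MCE (μ ν : G.Mor) : Set G.Mor :=
  {l | G.CommonExt μ ν l ∧ G.deg l = G.deg μ ⊔ G.deg ν}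

/-- A finite path of shape `len`: a degree-preserving functor from the grid graph
`Ω_{k,len}` to `G`. -/
structure Path (G : KGraph k) where
  len : Fin k → ℕ
  map : (p q : Fin k → ℕ) → p ≤ q → q ≤ len → G.Mor
  deg_map : ∀ p q hpq hq, G.deg (map p q hpq hq) = q - p
  comp_ok : ∀ p q r (hpq : p ≤ q) (hqr : q ≤ r) (hr : r ≤ len),
    G.src (map p q hpq (le_trans hqr hr)) = G.rng (map q r hqr hr)
  map_comp : ∀ p q r (hpq : p ≤ q) (hqr : q ≤ r) (hr : r ≤ len),
    G.comp (map p q hpq (le_trans hqr hr)) (map q r hqr hr) = map p r (le_trans hpq hqr) hr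

/-- An infinite path: a degree-preserving functor from the grid graph `Ω_k` to `G`. -/
structure InfPath (G : KGraph k) where
  map : (p q : Fin k → ℕ) → p ≤ q → G.Mor
  deg_map : ∀ p q hpq, G.deg (map p q hpq) = q - p
  comp_ok : ∀ p q r (hpq : p ≤ q) (hqr : q ≤ r),
    G.src (map p q hpq) = G.rng (map q r hqr)
  map_comp : ∀ p q r (hpq : p ≤ q) (hqr : q ≤ r),
    G.comp (map p q hpq) (map q r hqr) = map p r (le_trans hpq hqr)

/-- The shift `σ^m x` of a finite path. -/
def Path.shift {G : KGraph k} (x : G.Path) (m : Fin k → ℕ) (hm : m ≤ x.len) : G.Path where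
  len := x.len - m
  map p q hpq hq := x.map (m + p) (m + q)
    (by intro i; have h : p i ≤ q i := hpq i; simp only [Pi.add_apply]; omega)
    (by intro i; have h1 : q i ≤ (x.len - m) i := hq i; have h2 : m i ≤ x.len i := hm i
        simp only [Pi.sub_apply] at h1; simp only [Pi.add_apply]; omega)
  deg_map := by
    intro p q hpq hq
    rw [x.deg_map]
    funext i; simp only [Pi.sub_apply, Pi.add_apply]; omega
  comp_ok := by
    intro p q r hpq hqr hr
    exact x.comp_ok _ _ _ _ _ _
  map_comp := by
    intro p q r hpq hqr hr
    exact x.map_comp _ _ _ _ _ _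

/-- The shift `σ^m x` of an infinite path. -/
def InfPath.shift {G : KGraph k} (x : G.InfPath) (m : Fin k → ℕ) : G.InfPath where
  map p q hpq := x.map (m + p) (m + q)
    (by intro i; have h : p i ≤ q i := hpq i; simp only [Pi.add_apply]; omega)
  deg_map := by
    intro p q hpq
    rw [x.deg_map]
    funext i; simp only [Pi.sub_apply, Pi.add_apply]; omega
  comp_ok := by
    intro p q r hpq hqr
    exact x.comp_ok _ _ _ _ _
  map_comp := by
    intro p q r hpq hqr
    exact x.map_comp _ _ _ _ _

/-- An infinite path is aperiodic if `σ^m x = σ^n x` implies `m = n`. -/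
def InfPath.Aperiodic {G : KGraph k} (x : G.InfPath) : Prop :=
  ∀ m n : Fin k → ℕ, x.shift m = x.shift n → m = n

/-- Condition (⋆): `l(m, m + d(l) - (m ∨ n)) ≠ l(n, n + d(l) - (m ∨ n))`. -/
def SegCond (l : G.Mor) (m n : Fin k → ℕ) : Prop :=
  ∀ (h1 : m ≤ m + (G.deg l - (m ⊔ n))) (h2 : m + (G.deg l - (m ⊔ n)) ≤ G.deg l)
    (h3 : n ≤ n + (G.deg l - (m ⊔ n))) (h4 : n + (G.deg l - (m ⊔ n)) ≤ G.deg l),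
    G.seg l m (m + (G.deg l - (m ⊔ n))) h1 h2 ≠ G.seg l n (n + (G.deg l - (m ⊔ n))) h3 h4

end KGraph

namespace KGraph

variable {k : ℕ} {G : KGraph k}

theorem eq_and_eq_of_comp_eq_comp {μ ν μ' ν' : G.Mor} (hs : G.src μ = G.rng ν)
    (hs' : G.src μ' = G.rng ν') (hd : G.deg μ = G.deg μ') (h : G.comp μ ν = G.comp μ' ν') :
    μ = μ' ∧ ν = ν' := by
  have hdν : G.deg ν = G.deg ν' :=
    add_left_cancel (by rw [← G.deg_comp _ _ hs, hd, ← G.deg_comp _ _ hs', h])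
  exact Prod.mk.inj <| (G.factor _ _ _ (G.deg_comp _ _ hs')).unique
    ⟨hs, hd, hdν, h⟩ ⟨hs', rfl, rfl, rfl⟩

theorem seg_spec (l : G.Mor) (a b : Fin k → ℕ) (hab : a ≤ b) (hb : b ≤ G.deg l) :
    ∃ μ ξ, G.src μ = G.rng (G.seg l a b hab hb) ∧ G.src (G.seg l a b hab hb) = G.rng ξ ∧
      G.deg μ = a ∧ G.deg (G.seg l a b hab hb) = b - a ∧
      G.comp μ (G.comp (G.seg l a b hab hb) ξ) = l := by
  have h₁ : G.deg l = a + (G.deg l - a) := (add_tsub_cancel_of_le (hab.trans hb)).symm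
  obtain ⟨hs, hdμ, hd, hc⟩ := (G.factor l a _ h₁).exists.choose_spec
  have h₂ : G.deg (G.factor l a _ h₁).exists.choose.2 = (b - a) + (G.deg l - b) := by
    rw [hd, add_comm, tsub_add_tsub_cancel hb hab]
  obtain ⟨hs', hdν, -, hc'⟩ := (G.factor _ _ _ h₂).exists.choose_spec
  rw [show G.seg l a b hab hb = (G.factor _ _ _ h₂).exists.choose.1 from rfl]
  refine ⟨_, _, ?_, hs', hdμ, hdν, ?_⟩
  · exact hs.trans ((congrArg G.rng hc').symm.trans (G.comp_rng _ _ hs'))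
  · rw [hc', hc]

theorem seg_eq_of_comp_comp_eq (l : G.Mor) {a b : Fin k → ℕ} (hab : a ≤ b) (hb : b ≤ G.deg l)
    {μ ν ξ : G.Mor} (hμν : G.src μ = G.rng ν) (hνξ : G.src ν = G.rng ξ)
    (hμ : G.deg μ = a) (hν : G.deg ν = b - a) (hl : G.comp μ (G.comp ν ξ) = l) :
    G.seg l a b hab hb = ν := by
  obtain ⟨μ', ξ', hμν', hνξ', hμ', hν', hl'⟩ := seg_spec l a b hab hb
  have hrest := (eq_and_eq_of_comp_eq_comp (by rwa [G.comp_rng _ _ hνξ'])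
    (by rwa [G.comp_rng _ _ hνξ]) (hμ'.trans hμ.symm) (hl'.trans hl.symm)).2
  exact (eq_and_eq_of_comp_eq_comp hνξ' hνξ (hν'.trans hν.symm) hrest).1

namespace InfPath

theorem ext {x y : G.InfPath} (h : ∀ p q hpq, x.map p q hpq = y.map p q hpq) : x = y := by
  cases x
  cases y
  simp only [InfPath.mk.injEq]
  funext p q hpq
  exact h p q hpq

theorem deg_map_zero (x : G.InfPath) (N : Fin k → ℕ) : G.deg (x.map 0 N zero_le) = N := by
  rw [x.deg_map, tsub_zero]

theorem seg_map_zero (x : G.InfPath) (N : Fin k → ℕ) {a b : Fin k → ℕ} (hab : a ≤ b)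
    (hb : b ≤ G.deg (x.map 0 N zero_le)) : G.seg (x.map 0 N zero_le) a b hab hb = x.map a b hab := by
  have hbN : b ≤ N := x.deg_map_zero N ▸ hb
  refine seg_eq_of_comp_comp_eq _ hab hb (x.comp_ok 0 a b zero_le hab) (x.comp_ok a b N hab hbN)
    (x.deg_map_zero a) (x.deg_map a b hab) ?_
  rw [x.map_comp a b N hab hbN, x.map_comp 0 a N zero_le (hab.trans hbN)]

theorem shift_eq_shift_iff (x : G.InfPath) (m n : Fin k → ℕ) :
    x.shift m = x.shift n ↔ ∀ p, x.map m (m + p) le_self_add = x.map n (n + p) le_self_add := by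
  refine ⟨fun h p => ?_, fun h => ext fun q q' hq => ?_⟩
  · have := congrArg (fun z : G.InfPath => z.map 0 p zero_le) h
    simpa only [shift, add_zero] using this
  have hmq : m + q ≤ m + q' := add_le_add_right hq m
  have hnq : n + q ≤ n + q' := add_le_add_right hq n
  refine (eq_and_eq_of_comp_eq_comp (x.comp_ok _ _ _ le_self_add hmq)
    (x.comp_ok _ _ _ le_self_add hnq) ?_ ?_).2
  · rw [x.deg_map, x.deg_map, add_tsub_cancel_left, add_tsub_cancel_left]
  · rw [x.map_comp, x.map_comp, h q']

theorem aperiodic_iff_exists_map_ne (x : G.InfPath) :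
    x.Aperiodic ↔ ∀ m n : Fin k → ℕ, m ≠ n →
      ∃ p, x.map m (m + p) le_self_add ≠ x.map n (n + p) le_self_add := by
  simp only [Aperiodic, shift_eq_shift_iff]
  exact forall₂_congr fun m n => by rw [← not_imp_not, not_forall]

theorem segCond_map_zero_iff (x : G.InfPath) (m n p : Fin k → ℕ) :
    G.SegCond (x.map 0 (p + (m ⊔ n)) zero_le) m n ↔
      x.map m (m + p) le_self_add ≠ x.map n (n + p) le_self_add := by
  have hp : G.deg (x.map 0 (p + (m ⊔ n)) zero_le) - (m ⊔ n) = p := by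
    rw [deg_map_zero, add_tsub_cancel_right]
  have hle : ∀ c ≤ m ⊔ n, c + p ≤ G.deg (x.map 0 (p + (m ⊔ n)) zero_le) := fun c hc => by
    rw [deg_map_zero, add_comm]
    exact add_le_add_right hc p
  simp only [SegCond, seg_map_zero, hp]
  exact ⟨fun h => h le_self_add (hle m le_sup_left) le_self_add (hle n le_sup_right),
    fun h _ _ _ _ => h⟩

end InfPath

end KGraph

/-- If for every `m ≠ n` the finite path `λ := x(0, p + (m ∨ n))` satisfies (⋆)
for some `p`, then `x` is aperiodic; conversely, if `x` is aperiodic then for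
all `m ≠ n` there exists such a `λ`. -/
theorem aperiodic_of_star_and_conversely {k : ℕ} (G : KGraph k) (x : G.InfPath) :
    ((∀ m n : Fin k → ℕ, m ≠ n → ∃ p : Fin k → ℕ,
        G.SegCond (x.map 0 (p + (m ⊔ n)) zero_le) m n) → x.Aperiodic) ∧
    (x.Aperiodic → ∀ m n : Fin k → ℕ, m ≠ n → ∃ p : Fin k → ℕ,
        G.SegCond (x.map 0 (p + (m ⊔ n)) zero_le) m n) := by
  simp only [KGraph.InfPath.segCond_map_zero_iff]
  exact ⟨x.aperiodic_iff_exists_map_ne.mpr, x.aperiodic_iff_exists_map_ne.mp⟩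
end

section
/- Let Λ be a discrete k-graph, v ∈ Λ^0, and suppose there exists an infinite aperiodic path x with r(x) = v. Then for every pair m ≠ n in ℕ^k there exists a finite path λ with r(λ) = v, d(λ) ≥ m∨n, and λ(m, m + d(λ) − (m∨n)) ≠ λ(n, n + d(λ) − (m∨n)). -/
namespace KGraph

variable {k : ℕ} (G : KGraph k)

/-- Characterization of `seg`: if `l = (α μ) β` with the right degrees, then
`seg l a b = μ`. -/
lemma seg_eq' {k : ℕ} (G : KGraph k) (l α μ β : G.Mor) (a b : Fin k → ℕ)
    (hab : a ≤ b) (hb : b ≤ G.deg l)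
    (s1 : G.src α = G.rng μ) (s2 : G.src μ = G.rng β)
    (dα : G.deg α = a) (dμ : G.deg μ = b - a) (dβ : G.deg β = G.deg l - b)
    (hl : G.comp (G.comp α μ) β = l) :
    G.seg l a b hab hb = μ := by
  unfold KGraph.seg
  have h1 : G.deg l = a + (G.deg l - a) := by
    funext i
    have h2 : a i ≤ b i := hab i
    have h3 : b i ≤ G.deg l i := hb i
    simp only [Pi.add_apply, Pi.sub_apply]
    omega
  have hp1 := (G.factor l a (G.deg l - a) h1).exists.choose_spec
  have smb : G.src μ = G.rng β := s2
  have hμβsrc : G.src α = G.rng (G.comp μ β) := by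
    rw [G.comp_rng μ β smb]; exact s1
  have hμβdeg : G.deg (G.comp μ β) = G.deg l - a := by
    rw [G.deg_comp μ β smb, dμ, dβ]
    funext i
    have e5 : a i ≤ b i := hab i
    have e6 : b i ≤ G.deg l i := hb i
    simp only [Pi.add_apply, Pi.sub_apply]
    omega
  have hμβcomp : G.comp α (G.comp μ β) = l := by
    rw [← G.comp_assoc α μ β s1 s2, hl]
  have key : (G.factor l a (G.deg l - a) h1).exists.choose = (α, G.comp μ β) :=
    (G.factor l a (G.deg l - a) h1).unique hp1 ⟨hμβsrc, dα, hμβdeg, hμβcomp⟩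
  have hc2 : (G.factor l a (G.deg l - a) h1).exists.choose.2 = G.comp μ β := by
    rw [key]
  -- Now the second factorization
  have h2' : G.deg ((G.factor l a (G.deg l - a) h1).exists.choose.2) =
      (b - a) + (G.deg l - b) := by
    rw [hp1.2.2.1]
    funext i
    have h3 : a i ≤ b i := hab i
    have h4 : b i ≤ G.deg l i := hb i
    simp only [Pi.add_apply, Pi.sub_apply]
    omega
  have hp2 := (G.factor _ (b - a) (G.deg l - b) h2').exists.choose_spec
  have key2 : (G.factor _ (b - a) (G.deg l - b) h2').exists.choose = (μ, β) := by
    refine (G.factor _ (b - a) (G.deg l - b) h2').unique hp2 ⟨s2, dμ, dβ, ?_⟩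
    exact hc2.symm
  exact congrArg Prod.fst key2

/-- Extensionality for infinite paths. -/
lemma InfPath.ext' {k : ℕ} {G : KGraph k} {x y : G.InfPath}
    (h : ∀ p q hpq, x.map p q hpq = y.map p q hpq) : x = y := by
  cases x; cases y
  congr 1
  funext p q hpq
  exact h p q hpq

/-- A segment of an infinite path is determined via `seg`. -/
lemma infPath_seg {k : ℕ} (G : KGraph k) (x : G.InfPath) (s a b N : Fin k → ℕ)
    (hab : a ≤ b) (hbN : b ≤ N) (h1 : s ≤ s + N)
    (hb : b ≤ G.deg (x.map s (s + N) h1)) (h2 : s + a ≤ s + b) :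
    G.seg (x.map s (s + N) h1) a b hab hb = x.map (s + a) (s + b) h2 := by
  have hsa : s ≤ s + a := by intro i; simp only [Pi.add_apply]; omega
  have hsb : s + b ≤ s + N := by intro i; have e7 : b i ≤ N i := hbN i; simp only [Pi.add_apply]; omega
  have hdl : G.deg (x.map s (s + N) h1) = N := by
    rw [x.deg_map]; funext i; simp only [Pi.sub_apply, Pi.add_apply]; omega
  refine G.seg_eq' _ (x.map s (s + a) hsa) (x.map (s + a) (s + b) h2)
    (x.map (s + b) (s + N) hsb) a b hab hb ?_ ?_ ?_ ?_ ?_ ?_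
  · exact x.comp_ok s (s + a) (s + b) hsa h2
  · exact x.comp_ok (s + a) (s + b) (s + N) h2 hsb
  · rw [x.deg_map]; funext i; simp only [Pi.sub_apply, Pi.add_apply]; omega
  · rw [x.deg_map]; funext i; simp only [Pi.sub_apply, Pi.add_apply]; omega
  · rw [x.deg_map, hdl]; funext i
    have e7 : b i ≤ N i := hbN i; simp only [Pi.sub_apply, Pi.add_apply]; omega
  · rw [x.map_comp s (s + a) (s + b) hsa h2]
    exact x.map_comp s (s + b) (s + N) _ hsb

/-- If `σ^m x` and `σ^n x` agree on all initial segments, they are equal. -/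
lemma shift_eq_of_initial {k : ℕ} (G : KGraph k) (x : G.InfPath) (m n : Fin k → ℕ)
    (h : ∀ (q : Fin k → ℕ) (hm : m ≤ m + q) (hn : n ≤ n + q),
      x.map m (m + q) hm = x.map n (n + q) hn) :
    x.shift m = x.shift n := by
  apply InfPath.ext'
  intro p q hpq
  show x.map (m + p) (m + q) _ = x.map (n + p) (n + q) _
  have hm : m ≤ m + q := by intro i; simp only [Pi.add_apply]; omega
  have hn : n ≤ n + q := by intro i; simp only [Pi.add_apply]; omega
  have hqq : q ≤ q := le_rfl
  have hbm : q ≤ G.deg (x.map m (m + q) hm) := by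
    rw [x.deg_map]; intro i; simp only [Pi.sub_apply, Pi.add_apply]; omega
  have hpm : m + p ≤ m + q := by
    intro i; have e8 : p i ≤ q i := hpq i; simp only [Pi.add_apply]; omega
  have hpn : n + p ≤ n + q := by
    intro i; have e8 : p i ≤ q i := hpq i; simp only [Pi.add_apply]; omega
  have e1 := G.infPath_seg x m p q q hpq hqq hm hbm hpm
  have hbn : q ≤ G.deg (x.map n (n + q) hn) := by
    rw [x.deg_map]; intro i; simp only [Pi.sub_apply, Pi.add_apply]; omega
  have e2 := G.infPath_seg x n p q q hpq hqq hn hbn hpn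
  rw [← e1, ← e2]
  have hmn := h q hm hn
  -- transport the seg along hmn
  congr 1

lemma InfPath.map_congr {k : ℕ} {G : KGraph k} (x : G.InfPath) {a b b' : Fin k → ℕ}
    (h : b = b') (hab : a ≤ b) (hab' : a ≤ b') : x.map a b hab = x.map a b' hab' := by
  subst h; rfl

/-- Version of `infPath_seg` based at `0`. -/
lemma infPath_seg0 {k : ℕ} (G : KGraph k) (x : G.InfPath) (a b N : Fin k → ℕ)
    (hab : a ≤ b) (hbN : b ≤ N) (h1 : (0 : Fin k → ℕ) ≤ N)
    (hb : b ≤ G.deg (x.map 0 N h1)) (ha : (0 : Fin k → ℕ) ≤ a) :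
    G.seg (x.map 0 N h1) a b hab hb = x.map a b hab := by
  have hbN' : b ≤ N := hbN
  have hdl : G.deg (x.map 0 N h1) = N := by
    rw [x.deg_map]; funext i; simp only [Pi.sub_apply, Pi.zero_apply]; omega
  refine G.seg_eq' _ (x.map 0 a ha) (x.map a b hab) (x.map b N hbN') a b hab hb ?_ ?_ ?_ ?_ ?_ ?_
  · exact x.comp_ok 0 a b ha hab
  · exact x.comp_ok a b N hab hbN'
  · rw [x.deg_map]; funext i; simp only [Pi.sub_apply, Pi.zero_apply]; omega
  · rw [x.deg_map]
  · rw [x.deg_map, hdl]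
  · rw [x.map_comp 0 a b ha hab]
    exact x.map_comp 0 b N _ hbN'

end KGraph

/-- If there is an infinite aperiodic path `x` with `r(x) = v`, then for every
`m ≠ n` there is a finite path `λ` with `r(λ) = v`, `d(λ) ≥ m ∨ n`,
satisfying (⋆). -/
theorem star_of_aperiodic_path {k : ℕ} (G : KGraph k) (v : G.Obj) (x : G.InfPath)
    (hx : x.Aperiodic) (hr : G.rng (x.map 0 0 le_rfl) = v) :
    ∀ m n : Fin k → ℕ, m ≠ n →
      ∃ l : G.Mor, G.rng l = v ∧ m ⊔ n ≤ G.deg l ∧ G.SegCond l m n := by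
  intro m n hmn
  have hsh : x.shift m ≠ x.shift n := fun h => hmn (hx m n h)
  have hq : ∃ (q : Fin k → ℕ) (hm : m ≤ m + q) (hn : n ≤ n + q),
      x.map m (m + q) hm ≠ x.map n (n + q) hn := by
    by_contra h
    push_neg at h
    exact hsh (G.shift_eq_of_initial x m n fun q hm hn => h q hm hn)
  obtain ⟨q, hm, hn, hne⟩ := hq
  set N : Fin k → ℕ := m ⊔ n + q with hN
  have h0N : (0 : Fin k → ℕ) ≤ N := fun i => Nat.zero_le _
  set l : G.Mor := x.map 0 N h0N with hl
  have hdl : G.deg l = N := by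
    rw [hl, x.deg_map]; funext i; simp only [Pi.sub_apply, Pi.zero_apply]; omega
  have hsup : ∀ i, N i = max (m i) (n i) + q i := by
    intro i; rw [hN]; simp only [Pi.add_apply, Pi.sup_apply]
  refine ⟨l, ?_, ?_, ?_⟩
  · -- range of l is v
    have hco := x.comp_ok 0 0 N le_rfl h0N
    have h2 : G.rng l = G.rng (x.map 0 0 le_rfl) := by
      conv_lhs => rw [hl, ← x.map_comp 0 0 N le_rfl h0N]
      exact G.comp_rng _ _ hco
    rw [h2]; exact hr
  · intro i
    have := hsup i
    have h3 : (m ⊔ n) i = max (m i) (n i) := rfl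
    rw [hdl, h3, this]
    exact Nat.le_add_right _ _
  · intro h1 h2 h3 h4 heq
    have hE1 : m + (G.deg l - (m ⊔ n)) = m + q := by
      funext i
      have h5 := hsup i
      have h6 : (m ⊔ n) i = max (m i) (n i) := rfl
      simp only [Pi.add_apply, Pi.sub_apply, hdl, h6]
      omega
    have hE2 : n + (G.deg l - (m ⊔ n)) = n + q := by
      funext i
      have h5 := hsup i
      have h6 : (m ⊔ n) i = max (m i) (n i) := rfl
      simp only [Pi.add_apply, Pi.sub_apply, hdl, h6]
      omega
    have hb1 : m + (G.deg l - (m ⊔ n)) ≤ N := by rw [← hdl]; exact h2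
    have hb2 : n + (G.deg l - (m ⊔ n)) ≤ N := by rw [← hdl]; exact h4
    have s1 := G.infPath_seg0 x m (m + (G.deg l - (m ⊔ n))) N h1 hb1 h0N h2
      (fun i => Nat.zero_le _)
    have s2 := G.infPath_seg0 x n (n + (G.deg l - (m ⊔ n))) N h3 hb2 h0N h4
      (fun i => Nat.zero_le _)
    rw [s1, s2] at heq
    exact hne ((x.map_congr hE1.symm hm h1).trans (heq.trans (x.map_congr hE2 h3 hn)))
end

section
/- Let Λ be a discrete k-graph with no sources, v ∈ Λ^0, and suppose for every pair of distinct paths α, β with s(α) = s(β) there exists τ ∈ s(α)Λ with MCE(ατ, βτ) = ∅. Then for every v ∈ Λ^0 and every m ≠ n ∈ ℕ^k there exists λ ∈ vΛ with d(λ) ≥ m∨n satisfying λ(m, m + d(λ) − (m∨n)) ≠ λ(n, n + d(λ) − (m∨n)). -/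
/-! Take `μ ∈ vΛ^{m ∨ n}` and split it as `μ = μ(0,m) α = μ(0,n) β`; then `α ≠ β`, since
`d(α) = m ∨ n - m ≠ m ∨ n - n = d(β)`, and `s(α) = s(β)`, so condition (W) yields `τ` with
`MCE(ατ, βτ) = ∅`. For any `ρ ∈ s(τ)Λ^{m ∨ n}` the path `λ = μτρ` has
`λ(m, m + d(λ) - m ∨ n) = ατc` and `λ(n, n + d(λ) - m ∨ n) = βτc'` for initial segments `c, c'`
of `ρ`. If these were equal, they would form a common extension of `ατ` and `βτ`, and a common
extension always yields a minimal one. -/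

lemma Pi.eq_of_sup_tsub_eq_sup_tsub {ι : Type*} {m n : ι → ℕ} (h : m ⊔ n - m = m ⊔ n - n) :
    m = n := by
  funext i
  have hi := congrFun h i
  simp only [Pi.sub_apply, Pi.sup_apply] at hi
  omega

namespace KGraph

variable {k : ℕ} (G : KGraph k)

lemma exists_comp_eq_of_le {l : G.Mor} {a : Fin k → ℕ} (ha : a ≤ G.deg l) :
    ∃ x y, G.src x = G.rng y ∧ G.deg x = a ∧ G.deg y = G.deg l - a ∧ G.comp x y = l := by
  obtain ⟨⟨x, y⟩, ⟨hxy, hx, hy, h⟩, -⟩ :=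
    G.factor l a (G.deg l - a) (add_tsub_cancel_of_le ha).symm
  exact ⟨x, y, hxy, hx, hy, h⟩

lemma eq_of_comp_eq_comp {x y x' y' : G.Mor} (hxy : G.src x = G.rng y)
    (hxy' : G.src x' = G.rng y') (hx : G.deg x = G.deg x') (h : G.comp x y = G.comp x' y') :
    x = x' ∧ y = y' := by
  have hy : G.deg y = G.deg y' := by
    apply add_left_cancel (a := G.deg x)
    rw [← G.deg_comp x y hxy, h, G.deg_comp x' y' hxy', hx]
  exact Prod.ext_iff.mp <| (G.factor _ _ _ (G.deg_comp x y hxy)).unique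
    (y₁ := (x, y)) (y₂ := (x', y')) ⟨hxy, rfl, rfl, rfl⟩ ⟨hxy', hx.symm, hy.symm, h.symm⟩

lemma exists_comp_comp_seg (l : G.Mor) (a b : Fin k → ℕ) (hab : a ≤ b) (hb : b ≤ G.deg l) :
    ∃ x z, G.src x = G.rng (G.seg l a b hab hb) ∧ G.src (G.seg l a b hab hb) = G.rng z ∧
      G.deg x = a ∧ G.deg (G.seg l a b hab hb) = b - a ∧
      G.comp x (G.comp (G.seg l a b hab hb) z) = l := by
  have hl : G.deg l = a + (G.deg l - a) := (add_tsub_cancel_of_le (hab.trans hb)).symm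
  set p := (G.factor l a (G.deg l - a) hl).exists.choose
  obtain ⟨hp, hp₁, hp₂, hpl⟩ : G.src p.1 = G.rng p.2 ∧ G.deg p.1 = a ∧
      G.deg p.2 = G.deg l - a ∧ G.comp p.1 p.2 = l :=
    (G.factor l a (G.deg l - a) hl).exists.choose_spec
  have hp₂' : G.deg p.2 = (b - a) + (G.deg l - b) := by
    rw [hp₂, add_comm, tsub_add_tsub_cancel hb hab]
  set q := (G.factor p.2 (b - a) (G.deg l - b) hp₂').exists.choose
  obtain ⟨hq, hq₁, -, hqp⟩ : G.src q.1 = G.rng q.2 ∧ G.deg q.1 = b - a ∧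
      G.deg q.2 = G.deg l - b ∧ G.comp q.1 q.2 = p.2 :=
    (G.factor p.2 (b - a) (G.deg l - b) hp₂').exists.choose_spec
  have hseg : G.seg l a b hab hb = q.1 := rfl
  rw [hseg]
  refine ⟨p.1, q.2, ?_, hq, hp₁, hq₁, by rw [hqp, hpl]⟩
  rw [hp, ← hqp, G.comp_rng _ _ hq]

lemma seg_eq {l x y z : G.Mor} {a b : Fin k → ℕ} (hab : a ≤ b) (hb : b ≤ G.deg l)
    (hxy : G.src x = G.rng y) (hyz : G.src y = G.rng z) (hx : G.deg x = a)
    (hy : G.deg y = b - a) (h : G.comp x (G.comp y z) = l) :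
    G.seg l a b hab hb = y := by
  obtain ⟨x', z', hx'y', hy'z', hx', hy', h'⟩ := G.exists_comp_comp_seg l a b hab hb
  obtain ⟨-, hyz_eq⟩ := G.eq_of_comp_eq_comp (by rwa [G.comp_rng _ _ hy'z'])
    (by rwa [G.comp_rng _ _ hyz]) (hx'.trans hx.symm) (h'.trans h.symm)
  exact (G.eq_of_comp_eq_comp hy'z' hyz (hy'.trans hy.symm) hyz_eq).1

lemma exists_comp_eq_of_comp_eq_comp {μ μ' e f : G.Mor} (hμ : G.src μ = G.rng μ')
    (he : G.src e = G.rng f) (h : G.comp μ μ' = G.comp e f) (hle : G.deg μ ≤ G.deg e) :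
    ∃ μ'', G.src μ = G.rng μ'' ∧ G.comp μ μ'' = e := by
  have hdeg : G.deg μ + G.deg μ' = G.deg e + G.deg f := by
    rw [← G.deg_comp _ _ hμ, h, G.deg_comp _ _ he]
  have hle' : G.deg e - G.deg μ ≤ G.deg μ' := by
    rw [tsub_le_iff_left, hdeg]
    exact le_self_add
  obtain ⟨μ'', g, hμ''g, hμ'', hg, hμ'⟩ := G.exists_comp_eq_of_le hle'
  have hμμ'' : G.src μ = G.rng μ'' := by rw [hμ, ← hμ', G.comp_rng _ _ hμ''g]
  refine ⟨μ'', hμμ'', (G.eq_of_comp_eq_comp (y := g) ?_ he ?_ ?_).1⟩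
  · rw [G.comp_src _ _ hμμ'']
    exact hμ''g
  · rw [G.deg_comp _ _ hμμ'', hμ'', add_tsub_cancel_of_le hle]
  · rw [G.comp_assoc _ _ _ hμμ'' hμ''g, hμ', h]

variable {G} in
lemma CommonExt.mce_nonempty {μ ν l : G.Mor} (h : G.CommonExt μ ν l) :
    (G.MCE μ ν).Nonempty := by
  obtain ⟨⟨μ', hμ, hμl⟩, ⟨ν', hν, hνl⟩⟩ := h
  have hle : G.deg μ ⊔ G.deg ν ≤ G.deg l := by
    refine sup_le ?_ ?_
    · rw [← hμl, G.deg_comp _ _ hμ]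
      exact le_self_add
    · rw [← hνl, G.deg_comp _ _ hν]
      exact le_self_add
  obtain ⟨e, f, hef, he, -, hl⟩ := G.exists_comp_eq_of_le hle
  exact ⟨e, ⟨G.exists_comp_eq_of_comp_eq_comp hμ hef (hμl.trans hl.symm) (he ▸ le_sup_left),
    G.exists_comp_eq_of_comp_eq_comp hν hef (hνl.trans hl.symm) (he ▸ le_sup_right)⟩, he⟩

lemma exists_seg_comp_comp_eq {x α τ ρ μ : G.Mor} {a j : Fin k → ℕ}
    (hxα : G.src x = G.rng α) (hατ : G.src α = G.rng τ) (hτρ : G.src τ = G.rng ρ)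
    (hμ : G.comp x α = μ) (hx : G.deg x = a) (hj : G.deg μ = j) (hαρ : G.deg α ≤ G.deg ρ) :
    ∃ c, G.src (G.comp α τ) = G.rng c ∧ ∀ h₁ h₂,
      G.seg (G.comp μ (G.comp τ ρ)) a (a + (G.deg (G.comp μ (G.comp τ ρ)) - j)) h₁ h₂ =
        G.comp (G.comp α τ) c := by
  obtain ⟨c, d, hcd, hc, -, hρ⟩ := G.exists_comp_eq_of_le (l := ρ) (tsub_le_self (b := G.deg α))
  have hτc : G.src τ = G.rng c := by rw [hτρ, ← hρ, G.comp_rng _ _ hcd]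
  have hατc : G.src (G.comp α τ) = G.rng c := by rw [G.comp_src _ _ hατ, hτc]
  have hμτρ : G.src μ = G.rng (G.comp τ ρ) := by
    rw [G.comp_rng _ _ hτρ, ← hμ, G.comp_src _ _ hxα, hατ]
  refine ⟨c, hατc, fun h₁ h₂ => G.seg_eq h₁ h₂ (z := d) ?_ ?_ hx ?_ ?_⟩
  · rw [G.comp_rng _ _ hατc, G.comp_rng _ _ hατ, hxα]
  · rw [G.comp_src _ _ hατc, hcd]
  · rw [add_tsub_cancel_left, G.deg_comp _ _ hμτρ, hj, add_tsub_cancel_left,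
      G.deg_comp _ _ hατc, G.deg_comp _ _ hατ, hc, G.deg_comp _ _ hτρ, add_comm (G.deg α),
      add_assoc, add_tsub_cancel_of_le hαρ]
  · have hτcd : G.src τ = G.rng (G.comp c d) := by rw [G.comp_rng _ _ hcd, hτc]
    have hατcd : G.src α = G.rng (G.comp τ (G.comp c d)) := by rw [G.comp_rng _ _ hτcd, hατ]
    rw [← hρ, ← hμ, G.comp_assoc _ _ _ hατc hcd, G.comp_assoc _ _ _ hατ hτcd,
      G.comp_assoc _ _ _ hxα hατcd]

end KGraph

/-- If `Λ` has no sources and for every pair of distinct paths `α, β` with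
`s(α) = s(β)` there is `τ ∈ s(α)Λ` with `MCE(ατ, βτ) = ∅`, then for every
vertex `v` and every `m ≠ n` there is `λ ∈ vΛ` with `d(λ) ≥ m ∨ n`
satisfying (⋆). -/
theorem star_of_conditionW {k : ℕ} (G : KGraph k)
    (hns : ∀ (v : G.Obj) (p : Fin k → ℕ), ∃ l : G.Mor, G.rng l = v ∧ G.deg l = p)
    (hW : ∀ α β : G.Mor, α ≠ β → G.src α = G.src β →
      ∃ τ : G.Mor, G.rng τ = G.src α ∧ G.MCE (G.comp α τ) (G.comp β τ) = ∅) :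
    ∀ (v : G.Obj) (m n : Fin k → ℕ), m ≠ n →
      ∃ l : G.Mor, G.rng l = v ∧ m ⊔ n ≤ G.deg l ∧ G.SegCond l m n := by
  intro v m n hmn
  obtain ⟨μ, hμv, hμ⟩ := hns v (m ⊔ n)
  obtain ⟨xm, α, hxα, hxm, hα, hμα⟩ := G.exists_comp_eq_of_le (hμ ▸ le_sup_left : m ≤ G.deg μ)
  obtain ⟨xn, β, hxβ, hxn, hβ, hμβ⟩ := G.exists_comp_eq_of_le (hμ ▸ le_sup_right : n ≤ G.deg μ)
  have hαβ : α ≠ β := fun h =>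
    hmn <| Pi.eq_of_sup_tsub_eq_sup_tsub <| by rw [← hμ, ← hα, ← hβ, h]
  have hsrc : G.src α = G.src β := by
    rw [← G.comp_src _ _ hxα, hμα, ← hμβ, G.comp_src _ _ hxβ]
  obtain ⟨τ, hτ, hMCE⟩ := hW α β hαβ hsrc
  obtain ⟨ρ, hρ, hρdeg⟩ := hns (G.src τ) (m ⊔ n)
  have hμτρ : G.src μ = G.rng (G.comp τ ρ) := by
    rw [G.comp_rng _ _ hρ.symm, hτ, ← hμα, G.comp_src _ _ hxα]
  refine ⟨G.comp μ (G.comp τ ρ), by rw [G.comp_rng _ _ hμτρ, hμv], ?_, fun h₁ h₂ h₃ h₄ hseg => ?_⟩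
  · rw [G.deg_comp _ _ hμτρ, hμ]
    exact le_self_add
  obtain ⟨c, hc, hsegm⟩ := G.exists_seg_comp_comp_eq hxα hτ.symm hρ.symm hμα hxm hμ
    (by rw [hα, hρdeg, hμ]; exact tsub_le_self)
  obtain ⟨c', hc', hsegn⟩ := G.exists_seg_comp_comp_eq hxβ (hsrc ▸ hτ.symm) hρ.symm hμβ hxn hμ
    (by rw [hβ, hρdeg, hμ]; exact tsub_le_self)
  rw [hsegm, hsegn] at hseg
  have hext : G.CommonExt (G.comp α τ) (G.comp β τ) (G.comp (G.comp α τ) c) :=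
    ⟨⟨c, hc, rfl⟩, ⟨c', hc', hseg.symm⟩⟩
  simpa [hMCE] using hext.mce_nonempty
end
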